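/- Let t ≥ 2 be an integer, let r ∈ {1,2} and s ∈ {−1,0,1} with t ≡ s (mod 2) and t − 2r + s ≥ 0, and define S_{r,s}(t) := Σ_{k=0}^{⌊(t−2r+s)/6⌋} C((t−2k−2+s)/2, 2k+r−1) · I(2(2k+r), (t−2k+s)/2). If t − 2r + s is not a multiple of 6, then S_{r,s}(t) = (1/2) Σ_{k=0}^{⌊(t−2r+s)/6⌋} C((t−2k−2+s)/2, 2k+r−1) Σ_{i=0}^{2k+r−1} C(2k+r−1, i) · ((−1)^i / ((t+s)/2 − 3k − r + i)) · (1 − 2^{−((t+s)/2 − 3k − r + i)}). If t − 2r + s is a multiple of 6, then S_{r,s}(t) = (1/2) [ ln 2 + Σ_{k=0}^{(t−2r+s)/6 − 1} C((t−2k−2+s)/2, 2k+r−1) Σ_{i=0}^{2k+r−1} C(2k+r−1, i) · ((−1)^i / ((t+s)/2 − 3k − r + i)) · (1 − 2^{−((t+s)/2 − 3k − r + i)}) + Σ_{i=1}^{(t+r+s)/3 − 1} C((t+r+s)/3 − 1, i) · ((−1)^i / i) · (1 − 2^{−i}) ]. -/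

import Mathlib

/-- `Ical a c = ∫_0^∞ e^{−ax}/(1+e^{−2x})^c dx`. -/
noncomputable def Ical (a c : ℕ) : ℝ :=
  ∫ x in Set.Ioi (0 : ℝ), Real.exp (-(a : ℝ) * x) / (1 + Real.exp (-2 * x)) ^ c

/-- `S_{r,s}(t) = Σ_{k=0}^{⌊(t−2r+s)/6⌋} C((t−2k−2+s)/2, 2k+r−1) · I(2(2k+r), (t−2k+s)/2)`. -/
noncomputable def Srs (r : ℕ) (s : ℤ) (t : ℕ) : ℝ :=
  ∑ k ∈ Finset.range (((((t : ℤ) - 2 * r + s) / 6) + 1).toNat),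
    (Nat.choose ((((t : ℤ) - 2 * k - 2 + s) / 2).toNat) (2 * k + r - 1) : ℝ) *
      Ical (2 * (2 * k + r)) ((((t : ℤ) - 2 * k + s) / 2).toNat)

/-!
Writing `y = e^{-2x}` and `y^m = y (-1 + (1 + y))^{m-1}`, the binomial theorem reduces
`I(2m, c)` (for `1 ≤ m ≤ c`) to the integrals `I(2, d + 1) = ∫ y / (1 + y)^{d+1} dx`, which have
elementary antiderivatives: `I(2, d + 1) = (1 - 2^{-d}) / (2d)` for `d ≥ 1` and
`I(2, 1) = (log 2) / 2`. In `S_{r,s}(t)`, with `u = (t + s)/2`, the `k`-th summand has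
`m = 2k + r`, `c = u - k`, so `c - m = u - 3k - r`; this vanishes only for the last summand
when `3 ∣ u - r`, and that summand produces the `log 2`.
-/

open MeasureTheory Real Filter Set Finset
open scoped Topology

theorem pow_div_one_add_pow_eq_sum {K : Type*} [Field K] {y : K} (hy : 1 + y ≠ 0) {m c : ℕ}
    (hm : 1 ≤ m) (hmc : m ≤ c) :
    y ^ m / (1 + y) ^ c =
      ∑ i ∈ range m, (m - 1).choose i * (-1) ^ i * (y / (1 + y) ^ (c - m + i + 1)) := by
  have hexpand :
      y ^ m = y * ∑ i ∈ range m, (-1) ^ i * (1 + y) ^ (m - 1 - i) * (m - 1).choose i := by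
    rw [← Nat.sub_add_cancel hm, pow_succ', Nat.add_sub_cancel, ← add_pow, neg_add_cancel_left]
  rw [hexpand, mul_sum, sum_div]
  refine sum_congr rfl fun i hi => ?_
  have hsplit : (1 + y) ^ c = (1 + y) ^ (m - 1 - i) * (1 + y) ^ (c - m + i + 1) := by
    rw [← pow_add]; congr 1; have := mem_range.1 hi; omega
  rw [hsplit]
  field_simp

theorem integrableOn_Ical_integrand {a : ℕ} (ha : 0 < a) (c : ℕ) :
    IntegrableOn (fun x => exp (-(a : ℝ) * x) / (1 + exp (-2 * x)) ^ c) (Ioi 0) := by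
  have hcont : Continuous fun x => exp (-(a : ℝ) * x) / (1 + exp (-2 * x)) ^ c :=
    (by fun_prop : Continuous _).div (by fun_prop) fun x => by positivity
  refine (exp_neg_integrableOn_Ioi 0 (Nat.cast_pos.2 ha)).mono' hcont.aestronglyMeasurable ?_
  filter_upwards with x
  rw [norm_div, norm_pow, Real.norm_of_nonneg (exp_pos _).le,
    Real.norm_of_nonneg (by positivity : (0 : ℝ) ≤ 1 + exp (-2 * x))]
  exact div_le_self (exp_pos _).le (one_le_pow₀ (by linarith [exp_pos (-2 * x)]))

theorem Ical_two_mul_eq_sum {m c : ℕ} (hm : 1 ≤ m) (hmc : m ≤ c) :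
    Ical (2 * m) c = ∑ i ∈ range m, (m - 1).choose i * (-1) ^ i * Ical 2 (c - m + i + 1) := by
  have hpow (x : ℝ) : exp (-((2 * m : ℕ) : ℝ) * x) = exp (-2 * x) ^ m := by
    rw [← exp_nat_mul]; push_cast; ring_nf
  have hne (x : ℝ) : 1 + exp (-2 * x) ≠ 0 := by positivity
  simp only [Ical, Nat.cast_ofNat, hpow, pow_div_one_add_pow_eq_sum (hne _) hm hmc]
  have hint (n : ℕ) : IntegrableOn (fun x => exp (-2 * x) / (1 + exp (-2 * x)) ^ n) (Ioi 0) := by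
    simpa using integrableOn_Ical_integrand two_pos n
  rw [integral_finsetSum _ fun i _ => (hint _).const_mul _]
  simp only [integral_const_mul]

theorem hasDerivAt_one_add_exp_neg_two_mul (x : ℝ) :
    HasDerivAt (fun x => 1 + exp (-2 * x)) (-2 * exp (-2 * x)) x := by
  simpa [mul_comm] using (((hasDerivAt_id x).const_mul (-2 : ℝ)).exp).const_add 1

theorem tendsto_one_add_exp_neg_two_mul :
    Tendsto (fun x => 1 + exp (-2 * x)) atTop (𝓝 1) := by
  simpa using (tendsto_exp_atBot.comp
    (tendsto_id.const_mul_atTop_of_neg (by norm_num : (-2 : ℝ) < 0))).const_add 1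

theorem Ical_two_one : Ical 2 1 = log 2 / 2 := by
  have hderiv (x : ℝ) (_ : x ∈ Ici (0 : ℝ)) :
      HasDerivAt (fun x => -log (1 + exp (-2 * x)) / 2)
        (exp (-(2 : ℕ) * x) / (1 + exp (-2 * x)) ^ 1) x := by
    refine (((hasDerivAt_one_add_exp_neg_two_mul x).log (by positivity)).neg.div_const 2
      ).congr_deriv ?_
    push_cast; ring
  have hlim : Tendsto (fun x => -log (1 + exp (-2 * x)) / 2) atTop (𝓝 0) := by
    simpa using ((tendsto_one_add_exp_neg_two_mul.log one_ne_zero).neg.div_const 2)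
  rw [Ical, integral_Ioi_of_hasDerivAt_of_tendsto' hderiv
    (integrableOn_Ical_integrand two_pos 1) hlim]
  norm_num
  ring

theorem Ical_two_succ {d : ℕ} (hd : d ≠ 0) :
    Ical 2 (d + 1) = (1 - 2 ^ (-(d : ℤ))) / (2 * d) := by
  have hderiv (x : ℝ) (_ : x ∈ Ici (0 : ℝ)) :
      HasDerivAt (fun x => ((1 + exp (-2 * x)) ^ d)⁻¹ / (2 * d))
        (exp (-(2 : ℕ) * x) / (1 + exp (-2 * x)) ^ (d + 1)) x := by
    have hpos : 0 < 1 + exp (-2 * x) := by positivity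
    refine ((((hasDerivAt_one_add_exp_neg_two_mul x).pow d).inv
      (pow_ne_zero _ hpos.ne')).div_const _).congr_deriv ?_
    obtain ⟨e, rfl⟩ := Nat.exists_eq_add_one_of_ne_zero hd
    simp only [Pi.pow_apply]
    push_cast
    field_simp
    ring
  have hlim :
      Tendsto (fun x => ((1 + exp (-2 * x)) ^ d)⁻¹ / (2 * d)) atTop (𝓝 (1 / (2 * d))) := by
    simpa using ((tendsto_one_add_exp_neg_two_mul.pow d).inv₀ (by simp)).div_const (2 * (d : ℝ))
  rw [Ical, integral_Ioi_of_hasDerivAt_of_tendsto' hderiv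
    (integrableOn_Ical_integrand two_pos _) hlim]
  norm_num [zpow_neg, zpow_natCast]
  ring

theorem Ical_two_mul_of_lt {m c : ℕ} (hm : 1 ≤ m) (hmc : m < c) :
    Ical (2 * m) c = 1 / 2 * ∑ i ∈ range m, ((m - 1).choose i : ℝ) *
      ((-1) ^ i / (((c : ℤ) - m + i : ℤ) : ℝ)) *
      (1 - (2 : ℝ) ^ (-((c : ℤ) - m + i))) := by
  rw [Ical_two_mul_eq_sum hm hmc.le, mul_sum]
  refine sum_congr rfl fun i _ => ?_
  have hd : c - m + i ≠ 0 := by omega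
  have hcast : ((c - m + i : ℕ) : ℤ) = (c : ℤ) - m + i := by omega
  rw [Ical_two_succ hd, ← hcast]
  have : ((c - m + i : ℕ) : ℝ) ≠ 0 := Nat.cast_ne_zero.2 hd
  push_cast
  field_simp

theorem Ical_two_mul_self (n : ℕ) :
    Ical (2 * (n + 1)) (n + 1) = 1 / 2 * (log 2 + ∑ i ∈ Icc 1 n, (n.choose i : ℝ) *
      ((-1) ^ i / (i : ℝ)) * (1 - (2 : ℝ) ^ (-(i : ℤ)))) := by
  have hterm (i : ℕ) : (n.choose (i + 1) : ℝ) * (-1) ^ (i + 1) * Ical 2 (i + 1 + 1) =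
      1 / 2 * ((n.choose (1 + i) : ℝ) * ((-1) ^ (1 + i) / ((1 + i : ℕ) : ℝ)) *
        (1 - (2 : ℝ) ^ (-((1 + i : ℕ) : ℤ)))) := by
    rw [add_comm 1 i, Ical_two_succ (Nat.succ_ne_zero i)]
    have : ((i + 1 : ℕ) : ℝ) ≠ 0 := Nat.cast_ne_zero.2 (Nat.succ_ne_zero i)
    push_cast at this ⊢
    field_simp
  rw [Ical_two_mul_eq_sum (by omega) le_rfl, sum_range_succ', ← Finset.Ico_add_one_right_eq_Icc,
    sum_Ico_eq_sum_range, Nat.add_sub_cancel, Nat.sub_self]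
  simp only [zero_add, hterm, ← mul_sum, Nat.choose_zero_right, Ical_two_one]
  ring

theorem sum_choose_mul_Ical_eq {u r n : ℕ} (hr : 1 ≤ r) (hn : ∀ k < n, 3 * k + r < u) :
    ∑ k ∈ range n, ((u - k - 1).choose (2 * k + r - 1) : ℝ) * Ical (2 * (2 * k + r)) (u - k) =
      1 / 2 * ∑ k ∈ range n, ((u - k - 1).choose (2 * k + r - 1) : ℝ) *
        ∑ i ∈ range (2 * k + r), ((2 * k + r - 1).choose i : ℝ) *
          ((-1) ^ i / (((u : ℤ) - 3 * k - r + i : ℤ) : ℝ)) *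
          (1 - (2 : ℝ) ^ (-((u : ℤ) - 3 * k - r + i))) := by
  rw [mul_sum]
  refine sum_congr rfl fun k hk => ?_
  have hk := hn k (mem_range.1 hk)
  have hcast : ((u - k : ℕ) : ℤ) - ((2 * k + r : ℕ) : ℤ) = (u : ℤ) - 3 * k - r := by omega
  rw [Ical_two_mul_of_lt (by omega) (by omega), hcast]
  ring

theorem Srs_eval_general (t : ℕ) (r : ℕ) (hr : r = 1 ∨ r = 2) (s : ℤ)
    (hpar : (t : ℤ) ≡ s [ZMOD 2])
    (hnn : 0 ≤ (t : ℤ) - 2 * r + s) :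
    (¬ (6 ∣ ((t : ℤ) - 2 * r + s)) →
      Srs r s t = (1 / 2) * ∑ k ∈ Finset.range (((((t : ℤ) - 2 * r + s) / 6) + 1).toNat),
        (Nat.choose ((((t : ℤ) - 2 * k - 2 + s) / 2).toNat) (2 * k + r - 1) : ℝ) *
          ∑ i ∈ Finset.range (2 * k + r),
            (Nat.choose (2 * k + r - 1) i : ℝ) *
              ((-1) ^ i / ((((t : ℤ) + s) / 2 - 3 * k - r + i : ℤ) : ℝ)) *
              (1 - (2 : ℝ) ^ (-(((t : ℤ) + s) / 2 - 3 * k - r + i)))) ∧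
    ((6 ∣ ((t : ℤ) - 2 * r + s)) →
      Srs r s t = (1 / 2) * (Real.log 2
        + (∑ k ∈ Finset.range ((((t : ℤ) - 2 * r + s) / 6).toNat),
            (Nat.choose ((((t : ℤ) - 2 * k - 2 + s) / 2).toNat) (2 * k + r - 1) : ℝ) *
              ∑ i ∈ Finset.range (2 * k + r),
                (Nat.choose (2 * k + r - 1) i : ℝ) *
                  ((-1) ^ i / ((((t : ℤ) + s) / 2 - 3 * k - r + i : ℤ) : ℝ)) *
                  (1 - (2 : ℝ) ^ (-(((t : ℤ) + s) / 2 - 3 * k - r + i))))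
        + ∑ i ∈ Finset.Icc 1 ((((t : ℤ) + r + s) / 3 - 1).toNat),
            (Nat.choose ((((t : ℤ) + r + s) / 3 - 1).toNat) i : ℝ) *
              ((-1) ^ i / (i : ℝ)) * (1 - (2 : ℝ) ^ (-(i : ℤ))))) := by
  have hr1 : 1 ≤ r := by omega
  rw [Int.ModEq] at hpar
  obtain ⟨u, hu⟩ : ∃ u : ℕ, (t : ℤ) + s = 2 * u :=
    ⟨(((t : ℤ) + s) / 2).toNat, by omega⟩
  set q := (u - r) / 3 with hq
  have hhalf : ((t : ℤ) + s) / 2 = u := by omega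
  have hdiv6 : ((t : ℤ) - 2 * r + s) / 6 = q := by omega
  have hsucc : ((q : ℤ) + 1).toNat = q + 1 := by omega
  have hchoose (k : ℕ) : (((t : ℤ) - 2 * k - 2 + s) / 2).toNat = u - k - 1 := by omega
  have hupper (k : ℕ) : (((t : ℤ) - 2 * k + s) / 2).toNat = u - k := by omega
  simp only [Srs, hhalf, hdiv6, hsucc, Int.toNat_natCast, hchoose, hupper]
  constructor
  · intro hndvd
    exact sum_choose_mul_Ical_eq hr1 fun k hk => by omega
  · intro hdvd
    obtain ⟨n, hn⟩ : ∃ n, 2 * q + r = n + 1 := ⟨2 * q + r - 1, by omega⟩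
    have hlast : u - q - 1 = n ∧ u - q = n + 1 := by omega
    have hbinom : (((t : ℤ) + r + s) / 3 - 1).toNat = n := by omega
    rw [sum_range_succ, sum_choose_mul_Ical_eq hr1 fun k hk => by omega, hn, hlast.1, hlast.2,
      Nat.add_sub_cancel, Nat.choose_self, Ical_two_mul_self, hbinom]
    push_cast
    ring

/-- Evaluation of `S_{r,s}(t)` (Proposition 5.3). -/
theorem Srs_eval (t : ℕ) (ht : 2 ≤ t) (r : ℕ) (hr : r = 1 ∨ r = 2) (s : ℤ)
    (hs : s = -1 ∨ s = 0 ∨ s = 1) (hpar : (t : ℤ) ≡ s [ZMOD 2])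
    (hnn : 0 ≤ (t : ℤ) - 2 * r + s) :
    (¬ (6 ∣ ((t : ℤ) - 2 * r + s)) →
      Srs r s t = (1 / 2) * ∑ k ∈ Finset.range (((((t : ℤ) - 2 * r + s) / 6) + 1).toNat),
        (Nat.choose ((((t : ℤ) - 2 * k - 2 + s) / 2).toNat) (2 * k + r - 1) : ℝ) *
          ∑ i ∈ Finset.range (2 * k + r),
            (Nat.choose (2 * k + r - 1) i : ℝ) *
              ((-1) ^ i / ((((t : ℤ) + s) / 2 - 3 * k - r + i : ℤ) : ℝ)) *
              (1 - (2 : ℝ) ^ (-(((t : ℤ) + s) / 2 - 3 * k - r + i)))) ∧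
    ((6 ∣ ((t : ℤ) - 2 * r + s)) →
      Srs r s t = (1 / 2) * (Real.log 2
        + (∑ k ∈ Finset.range ((((t : ℤ) - 2 * r + s) / 6).toNat),
            (Nat.choose ((((t : ℤ) - 2 * k - 2 + s) / 2).toNat) (2 * k + r - 1) : ℝ) *
              ∑ i ∈ Finset.range (2 * k + r),
                (Nat.choose (2 * k + r - 1) i : ℝ) *
                  ((-1) ^ i / ((((t : ℤ) + s) / 2 - 3 * k - r + i : ℤ) : ℝ)) *
                  (1 - (2 : ℝ) ^ (-(((t : ℤ) + s) / 2 - 3 * k - r + i))))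
        + ∑ i ∈ Finset.Icc 1 ((((t : ℤ) + r + s) / 3 - 1).toNat),
            (Nat.choose ((((t : ℤ) + r + s) / 3 - 1).toNat) i : ℝ) *
              ((-1) ^ i / (i : ℝ)) * (1 - (2 : ℝ) ^ (-(i : ℤ))))) :=
  Srs_eval_general t r hr s hpar hnn
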